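/- arXiv:1104.2096 — 4 statements merged into one kernel-verified Lean document; each statement's English description precedes it below -/
import Mathlib

section
/- For any two projections A and B on a finite-dimensional Hilbert space and any density operator ρ, tr(ρA) + tr(ρB) ≤ 1 + ‖AB‖ (the Landau–Pollak type inequality). -/
open scoped ComplexOrder

/-- Operator norm of a matrix, viewed as an operator on Euclidean space. -/
noncomputable def opNorm {N : ℕ} (A : Matrix (Fin N) (Fin N) ℂ) : ℝ :=
  ‖Matrix.toEuclideanCLM (𝕜 := ℂ) A‖

/-- An orthogonal projection. -/
def IsProjection {N : ℕ} (A : Matrix (Fin N) (Fin N) ℂ) : Prop :=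
  A.IsHermitian ∧ A * A = A

/-- A density operator: positive semidefinite with trace one. -/
def IsDensity {N : ℕ} (ρ : Matrix (Fin N) (Fin N) ℂ) : Prop :=
  ρ.PosSemidef ∧ ρ.trace = 1

/-! For a vector `x` put `s = ‖Ax‖² + ‖Bx‖² = Re⟪x, (A + B)x⟫`. Cauchy–Schwarz gives
`s ≤ ‖x‖ ‖Ax + Bx‖`, while `⟪Ax, Bx⟫ = ⟪Ax, AB(Bx)⟫` gives
`‖Ax + Bx‖² ≤ s + 2‖AB‖ ‖Ax‖ ‖Bx‖ ≤ (1 + ‖AB‖) s`; together `s ≤ (1 + ‖AB‖) ‖x‖²`.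
So `A + B ≤ 1 + ‖AB‖` as quadratic forms, and the trace bound follows by writing `ρ` as a sum
of rank-one positive matrices `v vᴴ` with `∑ ‖v‖² = tr ρ = 1`. -/

open RCLike InnerProductSpace

section Projections

variable {𝕜 E : Type*} [RCLike 𝕜] [NormedAddCommGroup E] [InnerProductSpace 𝕜 E] [CompleteSpace E]
  {P Q : E →L[𝕜] E}

lemma IsStarProjection.apply_apply (hP : IsStarProjection P) (x : E) : P (P x) = P x := by
  rw [← mul_apply_eq_comp, hP.isIdempotentElem.eq]

lemma IsStarProjection.inner_apply_apply (hP : IsStarProjection P) (x y : E) :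
    ⟪P x, P y⟫_𝕜 = ⟪x, P y⟫_𝕜 := by
  rw [hP.isSelfAdjoint.isSymmetric.apply_clm, hP.apply_apply]

lemma IsStarProjection.norm_apply_sq (hP : IsStarProjection P) (x : E) :
    ‖P x‖ ^ 2 = re ⟪x, P x⟫_𝕜 := by
  rw [← hP.inner_apply_apply, inner_self_eq_norm_sq]

lemma IsStarProjection.re_inner_apply_apply_le (hP : IsStarProjection P) (hQ : IsStarProjection Q)
    (x : E) : re ⟪P x, Q x⟫_𝕜 ≤ ‖P * Q‖ * ‖P x‖ * ‖Q x‖ := by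
  have h : ⟪P x, Q x⟫_𝕜 = ⟪P x, (P * Q) (Q x)⟫_𝕜 := by
    rw [mul_apply_eq_comp, hQ.apply_apply, ← hP.isSelfAdjoint.isSymmetric.apply_clm,
      hP.apply_apply]
  calc re ⟪P x, Q x⟫_𝕜 ≤ ‖P x‖ * ‖(P * Q) (Q x)‖ := h ▸ re_inner_le_norm _ _
    _ ≤ ‖P x‖ * (‖P * Q‖ * ‖Q x‖) := by gcongr; exact (P * Q).le_opNorm _
    _ = ‖P * Q‖ * ‖P x‖ * ‖Q x‖ := by ring

lemma IsStarProjection.norm_apply_sq_add_norm_apply_sq_le (hP : IsStarProjection P)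
    (hQ : IsStarProjection Q) (x : E) :
    ‖P x‖ ^ 2 + ‖Q x‖ ^ 2 ≤ (1 + ‖P * Q‖) * ‖x‖ ^ 2 := by
  have hs : ‖P x‖ ^ 2 + ‖Q x‖ ^ 2 ≤ ‖x‖ * ‖P x + Q x‖ := by
    rw [hP.norm_apply_sq, hQ.norm_apply_sq, ← map_add, ← inner_add_right]
    exact re_inner_le_norm _ _
  have hsum : ‖P x + Q x‖ ^ 2 ≤ (1 + ‖P * Q‖) * (‖P x‖ ^ 2 + ‖Q x‖ ^ 2) := by
    rw [norm_add_sq (𝕜 := 𝕜)]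
    nlinarith [hP.re_inner_apply_apply_le hQ x, norm_nonneg (P * Q), sq_nonneg (‖P x‖ - ‖Q x‖)]
  have hs0 : 0 ≤ ‖P x‖ ^ 2 + ‖Q x‖ ^ 2 := by positivity
  generalize ‖P x‖ ^ 2 + ‖Q x‖ ^ 2 = s at hs hsum hs0 ⊢
  have hsq : s ^ 2 ≤ ‖x‖ ^ 2 * ‖P x + Q x‖ ^ 2 := by
    rw [← mul_pow]; exact pow_le_pow_left₀ hs0 hs 2
  have hss : s * s ≤ s * ((1 + ‖P * Q‖) * ‖x‖ ^ 2) := by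
    nlinarith [mul_le_mul_of_nonneg_left hsum (sq_nonneg ‖x‖)]
  rcases hs0.eq_or_lt with rfl | hpos
  · positivity
  · exact le_of_mul_le_mul_left hss hpos

end Projections

namespace Matrix

variable {n 𝕜 : Type*} [Fintype n] [RCLike 𝕜]

lemma trace_vecMulVec_star_mul (v : n → 𝕜) (M : Matrix n n 𝕜) :
    (vecMulVec v (star v) * M).trace = star v ⬝ᵥ M *ᵥ v := by
  rw [vecMulVec_mul, trace_vecMulVec, dotProduct_comm, dotProduct_mulVec]

lemma PosSemidef.re_trace_mul_le {ρ M : Matrix n n 𝕜} (hρ : ρ.PosSemidef) {t : ℝ}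
    (hM : ∀ x, re (star x ⬝ᵥ M *ᵥ x) ≤ t * re (star x ⬝ᵥ x)) :
    re (ρ * M).trace ≤ t * re ρ.trace := by
  classical
  obtain ⟨m, v, rfl⟩ := posSemidef_iff_eq_sum_vecMulVec.mp hρ
  conv_rhs => rw [← mul_one (∑ i, _)]
  simp only [Finset.sum_mul, trace_sum, trace_vecMulVec_star_mul, map_sum, Finset.mul_sum,
    one_mulVec]
  exact Finset.sum_le_sum fun i _ => hM (v i)

lemma star_dotProduct_mulVec_eq_inner [DecidableEq n] (M : Matrix n n 𝕜) (x : n → 𝕜) :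
    star x ⬝ᵥ M *ᵥ x = ⟪WithLp.toLp 2 x, toEuclideanCLM (𝕜 := 𝕜) M (WithLp.toLp 2 x)⟫_𝕜 := by
  rw [toEuclideanCLM_toLp, EuclideanSpace.inner_toLp_toLp, dotProduct_comm]

lemma re_star_dotProduct_self (x : n → 𝕜) : re (star x ⬝ᵥ x) = ‖WithLp.toLp 2 x‖ ^ 2 := by
  rw [← inner_self_eq_norm_sq (𝕜 := 𝕜), EuclideanSpace.inner_toLp_toLp, dotProduct_comm]

end Matrix

open Matrix

lemma IsProjection.isStarProjection_toEuclideanCLM {N : ℕ} {A : Matrix (Fin N) (Fin N) ℂ}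
    (hA : IsProjection A) : IsStarProjection (toEuclideanCLM (𝕜 := ℂ) A) :=
  (⟨hA.2, hA.1⟩ : IsStarProjection A).map _

lemma IsProjection.re_star_dotProduct_add_mulVec_le {N : ℕ} {A B : Matrix (Fin N) (Fin N) ℂ}
    (hA : IsProjection A) (hB : IsProjection B) (x : Fin N → ℂ) :
    re (star x ⬝ᵥ (A + B) *ᵥ x) ≤ (1 + opNorm (A * B)) * re (star x ⬝ᵥ x) := by
  have h := hA.isStarProjection_toEuclideanCLM.norm_apply_sq_add_norm_apply_sq_le
    hB.isStarProjection_toEuclideanCLM (WithLp.toLp 2 x)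
  rw [hA.isStarProjection_toEuclideanCLM.norm_apply_sq,
    hB.isStarProjection_toEuclideanCLM.norm_apply_sq, ← map_mul] at h
  rw [add_mulVec, dotProduct_add, map_add, star_dotProduct_mulVec_eq_inner,
    star_dotProduct_mulVec_eq_inner, re_star_dotProduct_self]
  exact h

/-- Landau–Pollak type inequality: tr(ρA) + tr(ρB) ≤ 1 + ‖AB‖. -/
theorem landau_pollak {N : ℕ} (A B ρ : Matrix (Fin N) (Fin N) ℂ)
    (hA : IsProjection A) (hB : IsProjection B) (hρ : IsDensity ρ) :
    ((ρ * A).trace).re + ((ρ * B).trace).re ≤ 1 + opNorm (A * B) := by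
  calc ((ρ * A).trace).re + ((ρ * B).trace).re = re (ρ * (A + B)).trace := by
        rw [Matrix.mul_add, trace_add, map_add]; rfl
    _ ≤ (1 + opNorm (A * B)) * re ρ.trace :=
        hρ.1.re_trace_mul_le (hA.re_star_dotProduct_add_mulVec_le hB)
    _ = 1 + opNorm (A * B) := by rw [hρ.2, one_re, mul_one]
end

section
/- For projections P₁,…,Pₘ (pairwise orthogonal, i.e. PᵢPⱼ = δᵢⱼPᵢ) and projections Q₁,…,Qₙ (pairwise orthogonal), with A = Σᵢ Pᵢ and B = Σⱼ Qⱼ, one has ‖AB‖² ≤ m·n·max_{i,j} tr(PᵢQⱼ). -/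
/-!
`A = ∑ Pᵢ` and `B = ∑ Qⱼ` are again orthogonal projections, so the C*-identity gives
`‖AB‖² = ‖(AB)* AB‖ = ‖BAB‖`. The matrix `BAB` is positive semidefinite, hence its norm (its
largest eigenvalue) is at most its trace, and `tr (BAB) = tr (AB) = ∑ᵢⱼ tr (PᵢQⱼ)` is a sum of
`mn` terms, each at most the maximum.
-/

open scoped ComplexOrder

open scoped Matrix.Norms.L2Operator

lemma isStarProjection_sum {ι R : Type*} [Fintype ι] [DecidableEq ι] [NonUnitalSemiring R]
    [StarRing R] {p : ι → R} (hp : ∀ i, IsSelfAdjoint (p i))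
    (hmul : ∀ i j, p i * p j = if i = j then p i else 0) :
    IsStarProjection (∑ i, p i) where
  isSelfAdjoint := isSelfAdjoint_sum _ fun i _ => hp i
  isIdempotentElem := by
    simp only [IsIdempotentElem, Finset.sum_mul_sum, hmul, Finset.sum_ite_eq, Finset.mem_univ,
      if_true]

lemma IsStarProjection.norm_mul_sq {R : Type*} [NormedRing R] [StarRing R] [CStarRing R]
    {p q : R} (hp : IsStarProjection p) (hq : IsStarProjection q) :
    ‖p * q‖ ^ 2 = ‖q * p * q‖ := by
  rw [sq, ← CStarRing.norm_star_mul_self, star_mul, hp.isSelfAdjoint.star_eq,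
    hq.isSelfAdjoint.star_eq, ← mul_assoc, mul_assoc q, hp.isIdempotentElem.eq]

namespace Matrix
variable {n 𝕜 : Type*} [Fintype n] [DecidableEq n] [RCLike 𝕜]

lemma PosSemidef.l2_opNorm_le_re_trace {A : Matrix n n 𝕜} (hA : A.PosSemidef) :
    ‖A‖ ≤ RCLike.re A.trace := by
  have htrace : RCLike.re A.trace = ∑ i, hA.1.eigenvalues i := by
    simp [hA.1.trace_eq_sum_eigenvalues]
  conv_lhs => rw [hA.1.spectral_theorem, Unitary.conjStarAlgAut_apply]
  rw [← Unitary.coe_star, CStarRing.norm_mul_coe_unitary, CStarRing.norm_coe_unitary_mul,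
    l2_opNorm_diagonal, htrace]
  refine pi_norm_le_iff_of_nonneg (Finset.sum_nonneg fun i _ => hA.eigenvalues_nonneg i)
    |>.mpr fun i => ?_
  simpa [abs_of_nonneg (hA.eigenvalues_nonneg i)] using
    Finset.single_le_sum (fun j _ => hA.eigenvalues_nonneg j) (Finset.mem_univ i)

lemma l2_opNorm_mul_sq_le_re_trace_of_isStarProjection {p q : Matrix n n 𝕜}
    (hp : IsStarProjection p) (hq : IsStarProjection q) :
    ‖p * q‖ ^ 2 ≤ RCLike.re (p * q).trace := by
  have hpsd : (q * p * q).PosSemidef := by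
    have := posSemidef_conjTranspose_mul_self (p * q)
    rwa [← star_eq_conjTranspose, star_mul, hp.isSelfAdjoint.star_eq, hq.isSelfAdjoint.star_eq,
      ← mul_assoc, mul_assoc q, hp.isIdempotentElem.eq] at this
  calc ‖p * q‖ ^ 2 = ‖q * p * q‖ := hp.norm_mul_sq hq
    _ ≤ RCLike.re (q * p * q).trace := hpsd.l2_opNorm_le_re_trace
    _ = RCLike.re (p * q).trace := by
      rw [trace_mul_cycle, hq.isIdempotentElem.eq, trace_mul_comm]

end Matrix

/-- For two families of mutually orthogonal projections with sums A and B,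
    ‖AB‖² ≤ m·n·max_{i,j} tr(PᵢQⱼ). -/
theorem opNorm_sq_le_card_mul_max_trace {N m n : ℕ} [NeZero m] [NeZero n]
    (P : Fin m → Matrix (Fin N) (Fin N) ℂ) (Q : Fin n → Matrix (Fin N) (Fin N) ℂ)
    (hPproj : ∀ i, IsProjection (P i))
    (hQproj : ∀ j, IsProjection (Q j))
    (hPorth : ∀ i i', P i * P i' = if i = i' then P i else 0)
    (hQorth : ∀ j j', Q j * Q j' = if j = j' then Q j else 0) :
    opNorm ((∑ i, P i) * (∑ j, Q j)) ^ 2 ≤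
      (m : ℝ) * n *
        Finset.univ.sup' Finset.univ_nonempty
          (fun p : Fin m × Fin n => ((P p.1 * Q p.2).trace).re) := by
  calc opNorm ((∑ i, P i) * (∑ j, Q j)) ^ 2 ≤ ((∑ i, P i) * ∑ j, Q j).trace.re :=
        Matrix.l2_opNorm_mul_sq_le_re_trace_of_isStarProjection
          (isStarProjection_sum (fun i => (hPproj i).1) hPorth)
          (isStarProjection_sum (fun j => (hQproj j).1) hQorth)
    _ = ∑ p : Fin m × Fin n, (P p.1 * Q p.2).trace.re := by
        simp only [Finset.sum_mul_sum, Matrix.trace_sum, Complex.re_sum, Fintype.sum_prod_type]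
    _ ≤ Fintype.card (Fin m × Fin n) • Finset.univ.sup' Finset.univ_nonempty
          (fun p : Fin m × Fin n => ((P p.1 * Q p.2).trace).re) :=
        Finset.sum_le_card_nsmul _ _ _ fun p _ =>
          Finset.le_sup' (fun p : Fin m × Fin n => (P p.1 * Q p.2).trace.re) (Finset.mem_univ p)
    _ = _ := by simp
end

section
/- Let A = {A_x}_{x∈Ω_A} and B = {B_y}_{y∈Ω_B} be PVMs on an N-dimensional Hilbert space, with (Ω_A,d_A), (Ω_B,d_B) finite metric spaces. For any state ρ and ε₁,ε₂ ∈ [0,1] with ε₁+ε₂ ≤ 1, the overall widths satisfy max_x |O_{d_A}(x, W_{ε₁}(ρ^A))| · max_y |O_{d_B}(y, W_{ε₂}(ρ^B))| ≥ (1-ε₁-ε₂)² / max_{x,y} tr(A_x B_y). -/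
/-!
Pick balls `S_A`, `S_B` of the optimal widths carrying probability at least `1 - ε₁`, `1 - ε₂`
(the infimum defining a width is attained, since the mass of a ball is upper semicontinuous in its
width) and coarse-grain the PVMs to the projections `P = ∑_{x ∈ S_A} A_x`, `Q = ∑_{y ∈ S_B} B_y`.
For projections, `‖Pv‖² + ‖Qv‖² = ⟪(P + Q)v, v⟫ ≤ ‖Pv + Qv‖ ‖v‖` while
`‖Pv + Qv‖² ≤ (1 + ‖PQ‖)(‖Pv‖² + ‖Qv‖²)` because `⟪Pv, Qv⟫ = ⟪Pv, PQ (Qv)⟫`; hence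
`‖P + Q‖ ≤ 1 + ‖PQ‖`. So `2 - ε₁ - ε₂ ≤ tr ρP + tr ρQ ≤ 1 + ‖PQ‖`, and
`‖PQ‖² ≤ tr (PQ) = ∑_{x ∈ S_A, y ∈ S_B} tr (A_x B_y) ≤ |S_A| |S_B| max tr (A_x B_y)`.
-/

open scoped ComplexOrder

/-- The ball O_d(x,w) = {y : d(x,y) ≤ w/2} in a finite metric space. -/
noncomputable def mball {Ω : Type*} [Fintype Ω] [MetricSpace Ω] (x : Ω) (w : ℝ) :
    Finset Ω :=
  Finset.univ.filter (fun y => dist x y ≤ w / 2)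

/-- The overall width of a probability distribution at confidence level 1-ε:
    W_ε(p) = inf{w > 0 : ∃ x, p(O_d(x,w)) ≥ 1-ε}. -/
noncomputable def overallWidth {Ω : Type*} [Fintype Ω] [MetricSpace Ω]
    (ε : ℝ) (p : Ω → ℝ) : ℝ :=
  sInf {w : ℝ | 0 < w ∧ ∃ x : Ω, 1 - ε ≤ ∑ y ∈ mball x w, p y}

/-- The outcome distribution of a measurement A in the state ρ. -/
noncomputable def probDist {N : ℕ} {Ω : Type*}
    (ρ : Matrix (Fin N) (Fin N) ℂ) (A : Ω → Matrix (Fin N) (Fin N) ℂ) (x : Ω) : ℝ :=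
  ((ρ * A x).trace).re

lemma isStarProjection_sum_s8 {R ι : Type*} [NonUnitalSemiring R] [StarRing R] {p : ι → R}
    (hp : ∀ i, IsStarProjection (p i)) (horth : ∀ i j, i ≠ j → p i * p j = 0) (s : Finset ι) :
    IsStarProjection (∑ i ∈ s, p i) := by
  classical
  induction s using Finset.induction_on with
  | empty => simp
  | insert a s ha ih =>
    rw [Finset.sum_insert ha]
    refine (hp a).add ih ?_
    rw [Finset.mul_sum]
    exact Finset.sum_eq_zero fun i hi => horth a i (ne_of_mem_of_not_mem hi ha).symm

section StarProjection

variable {𝕜 E : Type*} [RCLike 𝕜] [NormedAddCommGroup E] [InnerProductSpace 𝕜 E]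
  [CompleteSpace E] {p q : E →L[𝕜] E}

open RCLike ContinuousLinearMap

lemma IsStarProjection.re_inner_apply_self (hp : IsStarProjection p) (x : E) :
    re (inner 𝕜 (p x) x) = ‖p x‖ ^ 2 := by
  have hpp : p (p x) = p x := DFunLike.congr_fun hp.isIdempotentElem.eq x
  have hsymm : inner 𝕜 (p (p x)) x = inner 𝕜 (p x) (p x) := hp.isSelfAdjoint.isSymmetric _ _
  rw [← inner_self_eq_norm_sq (𝕜 := 𝕜), ← hsymm, hpp]

lemma IsStarProjection.norm_sq_add_norm_sq_le (hp : IsStarProjection p)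
    (hq : IsStarProjection q) (x : E) :
    ‖p x‖ ^ 2 + ‖q x‖ ^ 2 ≤ (1 + ‖p * q‖) * ‖x‖ ^ 2 := by
  set S := ‖p x‖ ^ 2 + ‖q x‖ ^ 2
  have hS : S ≤ ‖p x + q x‖ * ‖x‖ := by
    calc S = re (inner 𝕜 (p x + q x) x) := by
          rw [inner_add_left, map_add, hp.re_inner_apply_self, hq.re_inner_apply_self]
      _ ≤ ‖p x + q x‖ * ‖x‖ := (re_le_norm _).trans (norm_inner_le_norm _ _)
  have hcross : re (inner 𝕜 (p x) (q x)) ≤ ‖p * q‖ * ‖p x‖ * ‖q x‖ := by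
    have : inner 𝕜 (p x) (q x) = inner 𝕜 (p x) ((p * q) (q x)) := by
      have hpp : p (p x) = p x := DFunLike.congr_fun hp.isIdempotentElem.eq x
      have hqq : q (q x) = q x := DFunLike.congr_fun hq.isIdempotentElem.eq x
      have hsymm : inner 𝕜 (p (p x)) (q x) = inner 𝕜 (p x) (p (q x)) :=
        hp.isSelfAdjoint.isSymmetric _ _
      rw [mul_apply_eq_comp, hqq, ← hsymm, hpp]
    calc re (inner 𝕜 (p x) (q x)) ≤ ‖p x‖ * ‖(p * q) (q x)‖ :=
          this ▸ (re_le_norm _).trans (norm_inner_le_norm _ _)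
      _ ≤ ‖p x‖ * (‖p * q‖ * ‖q x‖) := by gcongr; exact le_opNorm _ _
      _ = _ := by ring
  have hsum : ‖p x + q x‖ ^ 2 ≤ (1 + ‖p * q‖) * S := by
    rw [norm_add_sq (𝕜 := 𝕜)]
    nlinarith [two_mul_le_add_sq ‖p x‖ ‖q x‖, norm_nonneg (p * q)]
  have hS0 : 0 ≤ S := by positivity
  have hSS : S * S ≤ S * ((1 + ‖p * q‖) * ‖x‖ ^ 2) :=
    calc S * S ≤ (‖p x + q x‖ * ‖x‖) ^ 2 := by rw [← sq]; gcongr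
      _ = ‖p x + q x‖ ^ 2 * ‖x‖ ^ 2 := by ring
      _ ≤ (1 + ‖p * q‖) * S * ‖x‖ ^ 2 := by gcongr
      _ = _ := by ring
  rcases hS0.eq_or_lt with hS0 | hS0
  · rw [← hS0]; positivity
  · exact le_of_mul_le_mul_left hSS hS0

lemma IsStarProjection.norm_add_le_one_add_norm_mul (hp : IsStarProjection p)
    (hq : IsStarProjection q) : ‖p + q‖ ≤ 1 + ‖p * q‖ := by
  rw [(p + q).norm_eq_iSup_rayleighQuotient (hp.isSelfAdjoint.add hq.isSelfAdjoint).isSymmetric]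
  refine ciSup_le fun x => ?_
  have hre : (p + q).reApplyInnerSelf x = ‖p x‖ ^ 2 + ‖q x‖ ^ 2 := by
    rw [reApplyInnerSelf_apply, add_apply, inner_add_left, map_add, hp.re_inner_apply_self,
      hq.re_inner_apply_self]
  rw [rayleighQuotient, hre, abs_of_nonneg (by positivity)]
  exact div_le_of_le_mul₀ (sq_nonneg _) (by positivity) (hp.norm_sq_add_norm_sq_le hq x)

end StarProjection

section ComplexMatrix

variable {n : Type*} [Fintype n]

open Matrix
open scoped Matrix.Norms.L2Operator MatrixOrder

lemma re_trace_sum_mul_sum_le {ι κ : Type*} {A : ι → Matrix n n ℂ} {B : κ → Matrix n n ℂ}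
    {s : Finset ι} {t : Finset κ} {M : ℝ} (h : ∀ x ∈ s, ∀ y ∈ t, (A x * B y).trace.re ≤ M) :
    ((∑ x ∈ s, A x) * ∑ y ∈ t, B y).trace.re ≤ s.card * t.card * M := by
  rw [Finset.sum_mul_sum, trace_sum, Complex.re_sum]
  calc _ ≤ ∑ x ∈ s, ∑ y ∈ t, M := Finset.sum_le_sum fun x hx => by
          rw [trace_sum, Complex.re_sum]
          exact Finset.sum_le_sum (h x hx)
    _ = s.card * t.card * M := by simp [mul_assoc]

lemma IsStarProjection.posSemidef {P : Matrix n n ℂ} (hP : IsStarProjection P) : P.PosSemidef := by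
  simpa [hP.isSelfAdjoint.isHermitian.eq, hP.isIdempotentElem.eq]
    using posSemidef_conjTranspose_mul_self P

variable [DecidableEq n]

lemma Matrix.PosSemidef.trace_mul_nonneg {A B : Matrix n n ℂ} (hA : A.PosSemidef)
    (hB : B.PosSemidef) : 0 ≤ (A * B).trace := by
  obtain ⟨C, rfl⟩ := CStarAlgebra.nonneg_iff_eq_star_mul_self.mp hB.nonneg
  rw [star_eq_conjTranspose, ← Matrix.mul_assoc, trace_mul_comm]
  simpa [Matrix.mul_assoc] using (hA.mul_mul_conjTranspose_same C).trace_nonneg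

lemma Matrix.PosSemidef.re_trace_mul_le_l2_opNorm {ρ H : Matrix n n ℂ} (hρ : ρ.PosSemidef)
    (htr : ρ.trace = 1) (hH : H.IsHermitian) : (ρ * H).trace.re ≤ ‖H‖ := by
  have hle : H ≤ algebraMap ℝ _ ‖H‖ := hH.isSelfAdjoint.le_algebraMap_norm_self
  have := hρ.trace_mul_nonneg (le_iff.mp hle)
  rw [Matrix.mul_sub, trace_sub, Algebra.algebraMap_eq_smul_one, Matrix.mul_smul, Matrix.mul_one,
    trace_smul, htr] at this
  simpa using (Complex.nonneg_iff.mp this).1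

lemma Matrix.PosSemidef.l2_opNorm_le_re_trace_s8 {A : Matrix n n ℂ} (hA : A.PosSemidef) :
    ‖A‖ ≤ A.trace.re := by
  cases isEmpty_or_nonempty n
  · simp [Subsingleton.elim A 0]
  obtain ⟨i, hi⟩ :=
    hA.1.spectrum_real_eq_range_eigenvalues ▸ CStarAlgebra.norm_mem_spectrum_of_nonneg hA.nonneg
  rw [← hi, hA.1.trace_eq_sum_eigenvalues, Complex.re_sum]
  simpa using Finset.single_le_sum (fun j _ => hA.eigenvalues_nonneg j) (Finset.mem_univ i)

lemma IsStarProjection.l2_opNorm_add_le {P Q : Matrix n n ℂ} (hP : IsStarProjection P)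
    (hQ : IsStarProjection Q) : ‖P + Q‖ ≤ 1 + ‖P * Q‖ := by
  simpa only [cstar_norm_def, map_add, map_mul] using
    (hP.map toEuclideanCLM).norm_add_le_one_add_norm_mul (hQ.map toEuclideanCLM)

lemma IsStarProjection.l2_opNorm_mul_sq_le {P Q : Matrix n n ℂ} (hP : IsStarProjection P)
    (hQ : IsStarProjection Q) : ‖P * Q‖ ^ 2 ≤ (P * Q).trace.re := by
  have htr : ((P * Q)ᴴ * (P * Q)).trace = (P * Q).trace := by
    rw [conjTranspose_mul, hP.isSelfAdjoint.isHermitian.eq, hQ.isSelfAdjoint.isHermitian.eq,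
      Matrix.mul_assoc, ← Matrix.mul_assoc P, hP.isIdempotentElem.eq, trace_mul_comm,
      Matrix.mul_assoc, hQ.isIdempotentElem.eq]
  rw [sq, ← l2_opNorm_conjTranspose_mul_self, ← htr]
  exact (posSemidef_conjTranspose_mul_self _).l2_opNorm_le_re_trace_s8

lemma IsStarProjection.sq_le_re_trace_mul {ρ P Q : Matrix n n ℂ} (hρ : ρ.PosSemidef)
    (htr : ρ.trace = 1) (hP : IsStarProjection P) (hQ : IsStarProjection Q) {c : ℝ} (hc : 0 ≤ c)
    (h : c + 1 ≤ (ρ * P).trace.re + (ρ * Q).trace.re) : c ^ 2 ≤ (P * Q).trace.re := by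
  have hsum : (ρ * P).trace.re + (ρ * Q).trace.re ≤ 1 + ‖P * Q‖ :=
    calc (ρ * P).trace.re + (ρ * Q).trace.re = (ρ * (P + Q)).trace.re := by
          rw [Matrix.mul_add, trace_add, Complex.add_re]
      _ ≤ ‖P + Q‖ :=
          hρ.re_trace_mul_le_l2_opNorm htr (hP.isSelfAdjoint.add hQ.isSelfAdjoint).isHermitian
      _ ≤ 1 + ‖P * Q‖ := hP.l2_opNorm_add_le hQ
  calc c ^ 2 ≤ ‖P * Q‖ ^ 2 := by gcongr; linarith
    _ ≤ (P * Q).trace.re := hP.l2_opNorm_mul_sq_le hQ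

end ComplexMatrix

section OverallWidth

variable {Ω : Type*} [Fintype Ω] [MetricSpace Ω] {p : Ω → ℝ}

lemma mball_eq_univ {w : ℝ} (hw : 2 * Metric.diam (Set.univ : Set Ω) ≤ w) (x : Ω) :
    mball x w = Finset.univ :=
  Finset.filter_true_of_mem fun y _ => by
    have := Metric.dist_le_diam_of_mem Set.finite_univ.isBounded (Set.mem_univ x) (Set.mem_univ y)
    linarith

lemma isClosed_setOf_exists_le_sum_mball (hp : 0 ≤ p) (c : ℝ) :
    IsClosed {w | ∃ x, c ≤ ∑ y ∈ mball x w, p y} := by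
  simp_rw [Set.ofPred_exists]
  refine isClosed_iUnion_of_finite fun x => ?_
  -- the mass of a ball is a nonnegative sum of indicators of the closed rays `[2 d(x,y), ∞)`
  have hsum : (fun w => ∑ y ∈ mball x w, p y) =
      fun w => ∑ y, (Set.Ici (2 * dist x y)).indicator (fun _ => p y) w := by
    ext w
    simp only [mball, Finset.sum_filter, Set.indicator_apply, Set.mem_Ici]
    refine Finset.sum_congr rfl fun y _ => if_congr ?_ rfl rfl
    constructor <;> intro h <;> linarith
  have husc : UpperSemicontinuous fun w => ∑ y ∈ mball x w, p y := by
    rw [hsum]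
    exact upperSemicontinuous_sum fun y _ => isClosed_Ici.upperSemicontinuous_indicator (hp y)
  exact husc.isClosed_preimage c

lemma exists_le_sum_mball_overallWidth [Nonempty Ω] {ε : ℝ} (hp : 0 ≤ p)
    (hε : 1 - ε ≤ ∑ y, p y) : ∃ x, 1 - ε ≤ ∑ y ∈ mball x (overallWidth ε p), p y := by
  have hne : {w : ℝ | 0 < w ∧ ∃ x : Ω, 1 - ε ≤ ∑ y ∈ mball x w, p y}.Nonempty := by
    refine ⟨2 * Metric.diam (Set.univ : Set Ω) + 1, by positivity, Classical.arbitrary Ω, ?_⟩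
    rwa [mball_eq_univ (by linarith)]
  exact closure_minimal (fun w hw => hw.2) (isClosed_setOf_exists_le_sum_mball hp _)
    (csInf_mem_closure hne ⟨0, fun w hw => hw.1.le⟩)

end OverallWidth

section PVM

variable {N : ℕ} {Ω : Type*} {ρ : Matrix (Fin N) (Fin N) ℂ}
  {A : Ω → Matrix (Fin N) (Fin N) ℂ}

lemma IsProjection.isStarProjection {P : Matrix (Fin N) (Fin N) ℂ} (h : IsProjection P) :
    IsStarProjection P :=
  ⟨h.2, h.1⟩

lemma sum_probDist (s : Finset Ω) : ∑ x ∈ s, probDist ρ A x = (ρ * ∑ x ∈ s, A x).trace.re := by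
  simp [probDist, Finset.mul_sum, Matrix.trace_sum, Complex.re_sum]

lemma exists_le_sum_mball_overallWidth_probDist [Fintype Ω] [Nonempty Ω] [MetricSpace Ω]
    (hρ : IsDensity ρ) (hA : ∀ x, IsProjection (A x)) (hAsum : ∑ x, A x = 1) {ε : ℝ}
    (hε : 0 ≤ ε) :
    ∃ x, 1 - ε ≤ ∑ y ∈ mball x (overallWidth ε (probDist ρ A)), probDist ρ A y := by
  refine exists_le_sum_mball_overallWidth (fun x => ?_) ?_
  · exact (Complex.nonneg_iff.mp (hρ.1.trace_mul_nonneg (hA x).isStarProjection.posSemidef)).1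
  · rw [sum_probDist, hAsum, Matrix.mul_one, hρ.2, Complex.one_re]
    linarith

end PVM

theorem overall_width_tradeoff_general {N : ℕ} {ΩA ΩB : Type*}
    [Fintype ΩA] [Nonempty ΩA] [MetricSpace ΩA]
    [Fintype ΩB] [Nonempty ΩB] [MetricSpace ΩB]
    (A : ΩA → Matrix (Fin N) (Fin N) ℂ) (B : ΩB → Matrix (Fin N) (Fin N) ℂ)
    (hAproj : ∀ x, IsProjection (A x)) (hBproj : ∀ y, IsProjection (B y))
    (hAorth : ∀ x x', x ≠ x' → A x * A x' = 0)
    (hBorth : ∀ y y', y ≠ y' → B y * B y' = 0)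
    (hAsum : ∑ x, A x = 1) (hBsum : ∑ y, B y = 1)
    (ρ : Matrix (Fin N) (Fin N) ℂ) (hρ : IsDensity ρ)
    (ε₁ ε₂ : ℝ) (hε₁ : ε₁ ∈ Set.Icc (0 : ℝ) 1) (hε₂ : ε₂ ∈ Set.Icc (0 : ℝ) 1)
    (hε : ε₁ + ε₂ ≤ 1) :
    (1 - ε₁ - ε₂) ^ 2 /
        Finset.univ.sup' Finset.univ_nonempty
          (fun p : ΩA × ΩB => ((A p.1 * B p.2).trace).re) ≤
      (Finset.univ.sup' Finset.univ_nonempty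
          (fun x : ΩA => ((mball x (overallWidth ε₁ (probDist ρ A))).card : ℝ))) *
      (Finset.univ.sup' Finset.univ_nonempty
          (fun y : ΩB => ((mball y (overallWidth ε₂ (probDist ρ B))).card : ℝ))) := by
  have hA := fun x => (hAproj x).isStarProjection
  have hB := fun y => (hBproj y).isStarProjection
  obtain ⟨x₀, hx₀⟩ := exists_le_sum_mball_overallWidth_probDist hρ hAproj hAsum hε₁.1
  obtain ⟨y₀, hy₀⟩ := exists_le_sum_mball_overallWidth_probDist hρ hBproj hBsum hε₂.1
  set SA := mball x₀ (overallWidth ε₁ (probDist ρ A))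
  set SB := mball y₀ (overallWidth ε₂ (probDist ρ B))
  set M := Finset.univ.sup' Finset.univ_nonempty (fun p : ΩA × ΩB => ((A p.1 * B p.2).trace).re)
  have hoverlap : (1 - ε₁ - ε₂) ^ 2 ≤ ((∑ x ∈ SA, A x) * ∑ y ∈ SB, B y).trace.re := by
    refine (isStarProjection_sum_s8 hA hAorth SA).sq_le_re_trace_mul hρ.1 hρ.2
      (isStarProjection_sum_s8 hB hBorth SB) (by linarith) ?_
    rw [← sum_probDist, ← sum_probDist]
    linarith
  have hM_ge (x : ΩA) (y : ΩB) : (A x * B y).trace.re ≤ M :=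
    Finset.le_sup' (fun p : ΩA × ΩB => ((A p.1 * B p.2).trace).re) (Finset.mem_univ (x, y))
  have hM : 0 ≤ M := le_trans (Complex.nonneg_iff.mp
    ((hA x₀).posSemidef.trace_mul_nonneg (hB y₀).posSemidef)).1 (hM_ge x₀ y₀)
  have hSA := Finset.le_sup'
    (fun x : ΩA => ((mball x (overallWidth ε₁ (probDist ρ A))).card : ℝ)) (Finset.mem_univ x₀)
  have hSB := Finset.le_sup'
    (fun y : ΩB => ((mball y (overallWidth ε₂ (probDist ρ B))).card : ℝ)) (Finset.mem_univ y₀)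
  have hSA₀ := (Nat.cast_nonneg _).trans hSA
  refine div_le_of_le_mul₀ hM (mul_nonneg hSA₀ ((Nat.cast_nonneg _).trans hSB)) ?_
  calc (1 - ε₁ - ε₂) ^ 2 ≤ SA.card * SB.card * M :=
        hoverlap.trans (re_trace_sum_mul_sum_le fun x _ y _ => hM_ge x y)
    _ ≤ _ := by gcongr

/-- Uncertainty relation for joint localizability of two PVMs, in terms of
    overall widths. -/
theorem overall_width_tradeoff {N : ℕ} {ΩA ΩB : Type*}
    [Fintype ΩA] [Nonempty ΩA] [MetricSpace ΩA]
    [Fintype ΩB] [Nonempty ΩB] [MetricSpace ΩB]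
    (A : ΩA → Matrix (Fin N) (Fin N) ℂ) (B : ΩB → Matrix (Fin N) (Fin N) ℂ)
    (hAproj : ∀ x, IsProjection (A x)) (hBproj : ∀ y, IsProjection (B y))
    (hAorth : ∀ x x', x ≠ x' → A x * A x' = 0)
    (hBorth : ∀ y y', y ≠ y' → B y * B y' = 0)
    (hAsum : ∑ x, A x = 1) (hBsum : ∑ y, B y = 1)
    (ρ : Matrix (Fin N) (Fin N) ℂ) (hρ : IsDensity ρ)
    (ε₁ ε₂ : ℝ) (hε₁ : ε₁ ∈ Set.Icc (0 : ℝ) 1) (hε₂ : ε₂ ∈ Set.Icc (0 : ℝ) 1)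
    (hε : ε₁ + ε₂ ≤ 1)
    (hpos : 0 < Finset.univ.sup' Finset.univ_nonempty
      (fun p : ΩA × ΩB => ((A p.1 * B p.2).trace).re)) :
    (1 - ε₁ - ε₂) ^ 2 /
        Finset.univ.sup' Finset.univ_nonempty
          (fun p : ΩA × ΩB => ((A p.1 * B p.2).trace).re) ≤
      (Finset.univ.sup' Finset.univ_nonempty
          (fun x : ΩA => ((mball x (overallWidth ε₁ (probDist ρ A))).card : ℝ))) *
      (Finset.univ.sup' Finset.univ_nonempty
          (fun y : ΩB => ((mball y (overallWidth ε₂ (probDist ρ B))).card : ℝ))) :=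
  overall_width_tradeoff_general A B hAproj hBproj hAorth hBorth hAsum hBsum ρ hρ ε₁ ε₂ hε₁ hε₂ hε
end

section
/- Let E be a PVM and E₁ a POVM on a finite metric space (Ω,d). For any ε ∈ (0,1], the error bar width satisfies W_ε(E₁,E) ≤ (2/ε)·D_W(E₁,E), where D_W is Werner's distance D_W(E₁,E) = sup_{f∈Λ} ‖E₁(f) − E(f)‖ with Λ the Lipschitz ball. -/
open scoped ComplexOrder

/-- The error bar width W_ε(E₁,E): the infimum of w > 0 such that whenever a
    state ρ is perfectly localized at x for E, the E₁-distribution of ρ is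
    concentrated on O_d(x,w) up to ε. -/
noncomputable def errorBarWidth {N : ℕ} {Ω : Type*} [Fintype Ω] [MetricSpace Ω]
    (ε : ℝ) (E₁ E : Ω → Matrix (Fin N) (Fin N) ℂ) : ℝ :=
  sInf {w : ℝ | 0 < w ∧ ∀ (x : Ω) (ρ : Matrix (Fin N) (Fin N) ℂ), IsDensity ρ →
    ((ρ * E x).trace).re = 1 → 1 - ε ≤ ∑ x' ∈ mball x w, ((ρ * E₁ x').trace).re}

/-- Werner's geometric distance D_W(E₁,E) = sup_{f ∈ Λ} ‖E₁(f) − E(f)‖, where Λ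
    is the Lipschitz ball {f : |f(x)−f(y)| ≤ d(x,y)} and F(f) = Σ_x f(x)·F_x. -/
noncomputable def wernerDist {N : ℕ} {Ω : Type*} [Fintype Ω] [MetricSpace Ω]
    (E₁ E : Ω → Matrix (Fin N) (Fin N) ℂ) : ℝ :=
  sSup {r : ℝ | ∃ f : Ω → ℝ, (∀ x y, |f x - f y| ≤ dist x y) ∧
    r = opNorm (∑ x, (f x : ℂ) • (E₁ x - E x))}

/-! Fix `x`, a state `ρ` localized at `x` by `E`, and `w > 2 D_W / ε`. The truncated distance
`f = min (d(x, ·)) (w/2)` lies in the Lipschitz ball and vanishes at `x`, so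
`tr ρ (E₁(f) - E(f)) = Σ_y f(y) tr(ρ E₁_y)`, which is at least `w/2` times the `E₁`-probability
of leaving `O_d(x, w)` and at most `‖E₁(f) - E(f)‖ ≤ D_W`. Hence that probability is at most
`2 D_W / w < ε`. -/

open scoped Matrix.Norms.L2Operator MatrixOrder

lemma isHermitian_sum_smul_sub {ι n : Type*} [Fintype ι] (f : ι → ℝ) {F G : ι → Matrix n n ℂ}
    (hF : ∀ i, (F i).IsHermitian) (hG : ∀ i, (G i).IsHermitian) :
    (∑ i, (f i : ℂ) • (F i - G i)).IsHermitian :=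
  isSelfAdjoint_sum _ fun i _ => ((hF i).sub (hG i)).smul (Complex.conj_ofReal (f i))

lemma IsProjection.posSemidef {N : ℕ} {P : Matrix (Fin N) (Fin N) ℂ} (hP : IsProjection P) :
    P.PosSemidef := by
  simpa [hP.1.eq, hP.2] using Matrix.posSemidef_conjTranspose_mul_self P

section
variable {n : Type*} [Fintype n]

lemma re_trace_mul_sum_smul_sub {ι : Type*} [Fintype ι] (ρ : Matrix n n ℂ) (f : ι → ℝ)
    (F G : ι → Matrix n n ℂ) :
    (ρ * ∑ i, (f i : ℂ) • (F i - G i)).trace.re =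
      ∑ i, f i * (ρ * F i).trace.re - ∑ i, f i * (ρ * G i).trace.re := by
  simp only [Finset.mul_sum, Matrix.trace_sum, Complex.re_sum, ← Finset.sum_sub_distrib,
    mul_smul_comm, Matrix.trace_smul, smul_eq_mul, Complex.re_ofReal_mul, mul_sub,
    Matrix.trace_sub, Complex.sub_re]

variable [DecidableEq n]

lemma Matrix.PosSemidef.trace_mul_nonneg_s16 {ρ M : Matrix n n ℂ} (hρ : ρ.PosSemidef)
    (hM : M.PosSemidef) : 0 ≤ (ρ * M).trace := by
  obtain ⟨B, rfl⟩ := CStarAlgebra.nonneg_iff_eq_star_mul_self.mp hM.nonneg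
  rw [← mul_assoc, Matrix.trace_mul_cycle]
  exact (hρ.mul_mul_conjTranspose_same B).trace_nonneg

lemma Matrix.PosSemidef.re_trace_mul_nonneg {ρ M : Matrix n n ℂ} (hρ : ρ.PosSemidef)
    (hM : M.PosSemidef) : 0 ≤ (ρ * M).trace.re :=
  (Complex.nonneg_iff.mp (hρ.trace_mul_nonneg_s16 hM)).1

lemma Matrix.IsHermitian.trace_mul_le_norm {ρ A : Matrix n n ℂ} (hρ : ρ.PosSemidef)
    (hρ1 : ρ.trace = 1) (hA : A.IsHermitian) : (ρ * A).trace ≤ ‖A‖ := by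
  have hle : A ≤ algebraMap ℝ _ ‖A‖ := IsSelfAdjoint.le_algebraMap_norm_self hA
  have hgap := hρ.trace_mul_nonneg_s16 (Matrix.le_iff.mp hle)
  rw [mul_sub, Matrix.trace_sub, Algebra.algebraMap_eq_smul_one, mul_smul_comm, mul_one,
    Matrix.trace_smul, hρ1] at hgap
  simpa [sub_nonneg] using hgap

lemma sum_re_trace_mul_eq_one {ι : Type*} [Fintype ι] {ρ : Matrix n n ℂ} (hρ : ρ.trace = 1)
    {F : ι → Matrix n n ℂ} (hF : ∑ i, F i = 1) : ∑ i, (ρ * F i).trace.re = 1 := by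
  rw [← Complex.re_sum, ← Matrix.trace_sum, ← Finset.mul_sum, hF, mul_one, hρ, Complex.one_re]

end

lemma opNorm_eq_norm {N : ℕ} (A : Matrix (Fin N) (Fin N) ℂ) : opNorm A = ‖A‖ := rfl

lemma sum_mul_eq_of_apply_eq_one {Ω : Type*} [Fintype Ω] {p : Ω → ℝ} (hp : ∀ y, 0 ≤ p y)
    (hsum : ∑ y, p y = 1) {x : Ω} (hx : p x = 1) (f : Ω → ℝ) : ∑ y, f y * p y = f x := by
  classical
  have hrest : ∑ y ∈ Finset.univ.erase x, p y = 0 := by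
    linarith [Finset.add_sum_erase Finset.univ p (Finset.mem_univ x)]
  rw [Finset.sum_eq_zero_iff_of_nonneg fun y _ => hp y] at hrest
  rw [Finset.sum_eq_single x (fun y _ hy => by rw [hrest y (by simp [hy]), mul_zero]) (by simp),
    hx, mul_one]

lemma abs_sub_min_dist_le {Ω : Type*} [PseudoMetricSpace Ω] (x : Ω) (c : ℝ) (y z : Ω) :
    |min (dist x y) c - min (dist x z) c| ≤ dist y z := by
  simpa [Real.dist_eq] using ((LipschitzWith.dist_right x).min_const c).dist_le_mul y z

section
variable {Ω : Type*} [Fintype Ω] [MetricSpace Ω]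

lemma half_mul_one_sub_sum_mball_le {q : Ω → ℝ} (hq : ∀ y, 0 ≤ q y) (hsum : ∑ y, q y = 1)
    (x : Ω) {w : ℝ} (hw : 0 ≤ w) :
    w / 2 * (1 - ∑ y ∈ mball x w, q y) ≤ ∑ y, min (dist x y) (w / 2) * q y := by
  have hsplit := Finset.sum_filter_add_sum_filter_not Finset.univ (fun y => dist x y ≤ w / 2) q
  rw [hsum] at hsplit
  calc w / 2 * (1 - ∑ y ∈ mball x w, q y)
      = ∑ y ∈ Finset.univ.filter (fun y => ¬ dist x y ≤ w / 2), w / 2 * q y := by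
        rw [← Finset.mul_sum, ← hsplit, mball, add_sub_cancel_left]
    _ = ∑ y ∈ Finset.univ.filter (fun y => ¬ dist x y ≤ w / 2), min (dist x y) (w / 2) * q y :=
        Finset.sum_congr rfl fun y hy => by
          rw [min_eq_right (le_of_not_ge (Finset.mem_filter.mp hy).2)]
    _ ≤ ∑ y, min (dist x y) (w / 2) * q y :=
        Finset.sum_le_sum_of_subset_of_nonneg (Finset.filter_subset _ _) fun y _ _ =>
          mul_nonneg (le_min dist_nonneg (by linarith)) (hq y)

variable {N : ℕ} {E₁ E : Ω → Matrix (Fin N) (Fin N) ℂ}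

lemma bddAbove_wernerDist_set (hsum : ∑ x, E₁ x = ∑ x, E x) :
    BddAbove {r : ℝ | ∃ f : Ω → ℝ, (∀ x y, |f x - f y| ≤ dist x y) ∧
      r = opNorm (∑ x, (f x : ℂ) • (E₁ x - E x))} := by
  rcases isEmpty_or_nonempty Ω with hΩ | ⟨⟨x₀⟩⟩
  · exact ⟨0, by rintro r ⟨f, -, rfl⟩; simp [opNorm_eq_norm]⟩
  refine ⟨∑ x, dist x x₀ * ‖E₁ x - E x‖, ?_⟩
  rintro r ⟨f, hf, rfl⟩
  -- the sum of `E₁ x - E x` vanishes, so `f` may be shifted to vanish at `x₀`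
  have hshift : ∑ x, (f x : ℂ) • (E₁ x - E x) =
      ∑ x, ((f x - f x₀ : ℝ) : ℂ) • (E₁ x - E x) := by
    simp only [Complex.ofReal_sub, sub_smul, Finset.sum_sub_distrib, ← Finset.smul_sum, hsum,
      sub_self, smul_zero, sub_zero]
  rw [opNorm_eq_norm, hshift]
  refine (norm_sum_le _ _).trans (Finset.sum_le_sum fun x _ => ?_)
  rw [norm_smul, Complex.norm_real, Real.norm_eq_abs]
  exact mul_le_mul_of_nonneg_right (hf x x₀) (norm_nonneg _)

lemma opNorm_le_wernerDist (hsum : ∑ x, E₁ x = ∑ x, E x) {f : Ω → ℝ}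
    (hf : ∀ x y, |f x - f y| ≤ dist x y) :
    opNorm (∑ x, (f x : ℂ) • (E₁ x - E x)) ≤ wernerDist E₁ E :=
  le_csSup (bddAbove_wernerDist_set hsum) ⟨f, hf, rfl⟩

lemma wernerDist_nonneg (hsum : ∑ x, E₁ x = ∑ x, E x) : 0 ≤ wernerDist E₁ E :=
  (norm_nonneg _).trans (opNorm_le_wernerDist hsum (f := 0) (by simp))

lemma half_mul_one_sub_sum_mball_le_wernerDist
    (hEproj : ∀ x, IsProjection (E x)) (hEsum : ∑ x, E x = 1)
    (hE₁pos : ∀ x, (E₁ x).PosSemidef) (hE₁sum : ∑ x, E₁ x = 1)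
    {ρ : Matrix (Fin N) (Fin N) ℂ} (hρ : IsDensity ρ) {x : Ω} (hx : (ρ * E x).trace.re = 1)
    {w : ℝ} (hw : 0 ≤ w) :
    w / 2 * (1 - ∑ y ∈ mball x w, (ρ * E₁ y).trace.re) ≤ wernerDist E₁ E := by
  set f : Ω → ℝ := fun y => min (dist x y) (w / 2)
  have hfx : f x = 0 := by simpa [f] using div_nonneg hw zero_le_two
  have hA := isHermitian_sum_smul_sub f (fun y => (hE₁pos y).isHermitian) (fun y => (hEproj y).1)
  calc w / 2 * (1 - ∑ y ∈ mball x w, (ρ * E₁ y).trace.re)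
      ≤ ∑ y, f y * (ρ * E₁ y).trace.re :=
        half_mul_one_sub_sum_mball_le (fun y => hρ.1.re_trace_mul_nonneg (hE₁pos y))
          (sum_re_trace_mul_eq_one hρ.2 hE₁sum) x hw
    _ = ∑ y, f y * (ρ * E₁ y).trace.re - ∑ y, f y * (ρ * E y).trace.re := by
        rw [sum_mul_eq_of_apply_eq_one (fun y => hρ.1.re_trace_mul_nonneg (hEproj y).posSemidef)
          (sum_re_trace_mul_eq_one hρ.2 hEsum) hx, hfx, sub_zero]
    _ = (ρ * ∑ y, (f y : ℂ) • (E₁ y - E y)).trace.re := (re_trace_mul_sum_smul_sub ρ f E₁ E).symm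
    _ ≤ opNorm (∑ y, (f y : ℂ) • (E₁ y - E y)) :=
        (Complex.le_def.mp (hA.trace_mul_le_norm hρ.1 hρ.2)).1
    _ ≤ wernerDist E₁ E :=
        opNorm_le_wernerDist (hE₁sum.trans hEsum.symm) (abs_sub_min_dist_le x (w / 2))

end

theorem errorBarWidth_le_wernerDist_general {N : ℕ} {Ω : Type*} [Fintype Ω] [MetricSpace Ω]
    (E E₁ : Ω → Matrix (Fin N) (Fin N) ℂ)
    (hEproj : ∀ x, IsProjection (E x))
    (hEsum : ∑ x, E x = 1)
    (hE₁pos : ∀ x, (E₁ x).PosSemidef)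
    (hE₁sum : ∑ x, E₁ x = 1)
    (ε : ℝ) (hε : ε ∈ Set.Ioc (0 : ℝ) 1) :
    errorBarWidth ε E₁ E ≤ (2 / ε) * wernerDist E₁ E := by
  have hD : 0 ≤ wernerDist E₁ E := wernerDist_nonneg (hE₁sum.trans hEsum.symm)
  refine le_of_forall_gt_imp_ge_of_dense fun w hw => ?_
  have hw0 : 0 < w := (mul_nonneg (div_nonneg zero_le_two hε.1.le) hD).trans_lt hw
  refine csInf_le ⟨0, fun _ hv => hv.1.le⟩ ⟨hw0, fun x ρ hρ hx => ?_⟩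
  have htail := half_mul_one_sub_sum_mball_le_wernerDist hEproj hEsum hE₁pos hE₁sum hρ hx hw0.le
  have hεw : 2 * wernerDist E₁ E < ε * w := by
    rwa [div_mul_eq_mul_div, div_lt_iff₀' hε.1] at hw
  nlinarith [hε.1]

/-- Busch–Pearson: the error bar width is controlled by Werner's distance,
    W_ε(E₁,E) ≤ (2/ε)·D_W(E₁,E). -/
theorem errorBarWidth_le_wernerDist {N : ℕ} {Ω : Type*} [Fintype Ω] [MetricSpace Ω]
    (E E₁ : Ω → Matrix (Fin N) (Fin N) ℂ)
    (hEproj : ∀ x, IsProjection (E x))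
    (hEorth : ∀ x x', x ≠ x' → E x * E x' = 0)
    (hEsum : ∑ x, E x = 1)
    (hE₁pos : ∀ x, (E₁ x).PosSemidef)
    (hE₁sum : ∑ x, E₁ x = 1)
    (ε : ℝ) (hε : ε ∈ Set.Ioc (0 : ℝ) 1) :
    errorBarWidth ε E₁ E ≤ (2 / ε) * wernerDist E₁ E :=
  errorBarWidth_le_wernerDist_general E E₁ hEproj hEsum hE₁pos hE₁sum ε hε
end
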